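/- Orbit equation in integral form: let a > b > 0 and let r, θ : ℝ → ℝ be twice continuously differentiable functions satisfying the torus geodesic equations with angular momentum ℓ and speed v > 0. If λ₁ < λ₂ and r'(λ) > 0 for all λ ∈ [λ₁, λ₂], then θ(λ₂) − θ(λ₁) = ∫_{r(λ₁)}^{r(λ₂)} ℓ / ((a + b·cos(ρ/b))²·√(v² − ℓ²/(a + b·cos(ρ/b))²)) dρ. -/

import Mathlib

/-!
The torus metric is the warped product `dr² + R(r)² dθ²`. Differentiating and substituting the
geodesic equations shows that the angular momentum `R(r)² θ'` (Clairaut's relation) and the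
energy `r'² + R(r)² θ'²` are constant along a geodesic, with values `ℓ` and `v²`. Hence
`θ' = ℓ / R(r)²` and, where `r' > 0`, `r' = √(v² − ℓ² / R(r)²)`, so `θ' = f(r) · r'` for the
orbit integrand `f`; the substitution `ρ = r(λ)` turns `∫ θ'` into the orbit integral.
-/

open Real Set intervalIntegral

theorem sub_eq_integral_of_deriv_eq_comp_mul_deriv {r θ f : ℝ → ℝ} {t₁ t₂ : ℝ}
    (hr : ContDiff ℝ 1 r) (hθ : ContDiff ℝ 1 θ) (hf : ContinuousOn f (r '' uIcc t₁ t₂))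
    (h : ∀ t ∈ uIcc t₁ t₂, deriv θ t = f (r t) * deriv r t) :
    θ t₂ - θ t₁ = ∫ ρ in r t₁..r t₂, f ρ := by
  rw [← integral_comp_mul_deriv' (fun t _ => (hr.differentiable one_ne_zero t).hasDerivAt)
      hr.continuous_deriv_one.continuousOn hf,
    ← integral_deriv_eq_sub (fun t _ => hθ.differentiable one_ne_zero t)
      (hθ.continuous_deriv_one.intervalIntegrable _ _)]
  exact integral_congr h

theorem sub_eq_orbitIntegral_of_conserved {G r θ : ℝ → ℝ} {ℓ E t₁ t₂ : ℝ}
    (hG : Continuous G) (hG0 : ∀ x, G x ≠ 0) (hr : ContDiff ℝ 1 r) (hθ : ContDiff ℝ 1 θ)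
    (h12 : t₁ ≤ t₂) (hmono : ∀ t ∈ Icc t₁ t₂, 0 < deriv r t)
    (hℓ : ∀ t ∈ Icc t₁ t₂, G (r t) ^ 2 * deriv θ t = ℓ)
    (hE : ∀ t ∈ Icc t₁ t₂, deriv r t ^ 2 + G (r t) ^ 2 * deriv θ t ^ 2 = E) :
    θ t₂ - θ t₁ = ∫ ρ in r t₁..r t₂, ℓ / (G ρ ^ 2 * √(E - ℓ ^ 2 / G ρ ^ 2)) := by
  have hspeed : ∀ t ∈ Icc t₁ t₂, √(E - ℓ ^ 2 / G (r t) ^ 2) = deriv r t := by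
    intro t ht
    have hG2 := pow_ne_zero 2 (hG0 (r t))
    have hr'sq : E - ℓ ^ 2 / G (r t) ^ 2 = deriv r t ^ 2 := by
      rw [← hE t ht, ← hℓ t ht]
      field_simp
      ring
    rw [hr'sq, sqrt_sq (hmono t ht).le]
  refine sub_eq_integral_of_deriv_eq_comp_mul_deriv hr hθ ?_ fun t ht => ?_
  · have hcont : Continuous fun ρ => G ρ ^ 2 * √(E - ℓ ^ 2 / G ρ ^ 2) := by
      have hG2 : ∀ ρ, G ρ ^ 2 ≠ 0 := fun ρ => pow_ne_zero 2 (hG0 ρ)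
      fun_prop (disch := exact hG2 _)
    rintro - ⟨t, ht, rfl⟩
    rw [uIcc_of_le h12] at ht
    refine (continuousAt_const.div hcont.continuousAt ?_).continuousWithinAt
    rw [hspeed t ht]
    exact mul_ne_zero (pow_ne_zero 2 (hG0 _)) (hmono t ht).ne'
  · rw [uIcc_of_le h12] at ht
    rw [hspeed t ht, ← hℓ t ht]
    field_simp [hG0 (r t), (hmono t ht).ne']

/-- The geodesic equations of the warped product metric `dr² + G(r)² dθ²`, where `G'` is the
derivative of `G`. -/
def IsWarpedProductGeodesic (G G' r θ : ℝ → ℝ) : Prop :=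
  ∀ t, deriv (deriv r) t = G (r t) * G' (r t) * deriv θ t ^ 2 ∧
    deriv (deriv θ) t = -(2 * G' (r t) / G (r t)) * deriv r t * deriv θ t

namespace IsWarpedProductGeodesic

variable {G G' r θ : ℝ → ℝ}

theorem hasDerivAt_angularMomentum (hgeo : IsWarpedProductGeodesic G G' r θ)
    (hG : ∀ x, HasDerivAt G (G' x) x) (hG0 : ∀ x, G x ≠ 0) (hr : Differentiable ℝ r)
    (hθ' : Differentiable ℝ (deriv θ)) (t : ℝ) :
    HasDerivAt (fun t => G (r t) ^ 2 * deriv θ t) 0 t := by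
  refine ((((hG (r t)).comp t (hr t).hasDerivAt).pow 2).mul (hθ' t).hasDerivAt).congr_deriv ?_
  have := hG0 (r t)
  rw [(hgeo t).2]
  simp only [Function.comp_apply, Pi.pow_apply]
  field_simp
  ring

theorem hasDerivAt_energy (hgeo : IsWarpedProductGeodesic G G' r θ)
    (hG : ∀ x, HasDerivAt G (G' x) x) (hG0 : ∀ x, G x ≠ 0) (hr : Differentiable ℝ r)
    (hr' : Differentiable ℝ (deriv r)) (hθ' : Differentiable ℝ (deriv θ)) (t : ℝ) :
    HasDerivAt (fun t => deriv r t ^ 2 + G (r t) ^ 2 * deriv θ t ^ 2) 0 t := by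
  refine (((hr' t).hasDerivAt.pow 2).add ((((hG (r t)).comp t (hr t).hasDerivAt).pow 2).mul
    ((hθ' t).hasDerivAt.pow 2))).congr_deriv ?_
  have := hG0 (r t)
  rw [(hgeo t).1, (hgeo t).2]
  simp only [Function.comp_apply, Pi.pow_apply]
  field_simp
  ring

theorem angularMomentum_eq (hgeo : IsWarpedProductGeodesic G G' r θ)
    (hG : ∀ x, HasDerivAt G (G' x) x) (hG0 : ∀ x, G x ≠ 0) (hr : Differentiable ℝ r)
    (hθ' : Differentiable ℝ (deriv θ)) (s t : ℝ) :
    G (r s) ^ 2 * deriv θ s = G (r t) ^ 2 * deriv θ t :=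
  have h := hgeo.hasDerivAt_angularMomentum hG hG0 hr hθ'
  is_const_of_deriv_eq_zero (fun x => (h x).differentiableAt) (fun x => (h x).deriv) s t

theorem energy_eq (hgeo : IsWarpedProductGeodesic G G' r θ)
    (hG : ∀ x, HasDerivAt G (G' x) x) (hG0 : ∀ x, G x ≠ 0) (hr : Differentiable ℝ r)
    (hr' : Differentiable ℝ (deriv r)) (hθ' : Differentiable ℝ (deriv θ)) (s t : ℝ) :
    deriv r s ^ 2 + G (r s) ^ 2 * deriv θ s ^ 2 = deriv r t ^ 2 + G (r t) ^ 2 * deriv θ t ^ 2 :=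
  have h := hgeo.hasDerivAt_energy hG hG0 hr hr' hθ'
  is_const_of_deriv_eq_zero (fun x => (h x).differentiableAt) (fun x => (h x).deriv) s t

end IsWarpedProductGeodesic

theorem torusRadius_pos {a b : ℝ} (h : |b| < a) (ρ : ℝ) : 0 < a + b * cos (ρ / b) := by
  have hcos : |b * cos (ρ / b)| ≤ |b| := by
    rw [abs_mul]
    exact mul_le_of_le_one_right (abs_nonneg b) (abs_cos_le_one _)
  linarith [neg_abs_le (b * cos (ρ / b))]

theorem hasDerivAt_torusRadius (a : ℝ) {b : ℝ} (hb : b ≠ 0) (ρ : ℝ) :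
    HasDerivAt (fun ρ => a + b * cos (ρ / b)) (-sin (ρ / b)) ρ := by
  refine ((((hasDerivAt_id' ρ).div_const b).cos.const_mul b).const_add a).congr_deriv ?_
  field_simp

theorem IsWarpedProductGeodesic.of_torus {a b : ℝ} {r θ : ℝ → ℝ}
    (hgeo : ∀ t, deriv (deriv r) t = -sin (r t / b) * (a + b * cos (r t / b)) * deriv θ t ^ 2 ∧
      deriv (deriv θ) t = 2 * sin (r t / b) / (a + b * cos (r t / b)) * deriv r t * deriv θ t) :
    IsWarpedProductGeodesic (fun ρ => a + b * cos (ρ / b)) (fun ρ => -sin (ρ / b)) r θ :=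
  fun t => by
    obtain ⟨hr, hθ⟩ := hgeo t
    constructor
    · rw [hr]; ring
    · rw [hθ]; ring

theorem torus_geodesic_orbit_integral_general
    (a b : ℝ) (hb : 0 < b) (hab : b < a)
    (r θ : ℝ → ℝ) (hr : ContDiff ℝ 2 r) (hθ : ContDiff ℝ 2 θ)
    (hgeo : ∀ t : ℝ,
      deriv (deriv r) t =
        -Real.sin (r t / b) * (a + b * Real.cos (r t / b)) * (deriv θ t) ^ 2 ∧
      deriv (deriv θ) t =
        (2 * Real.sin (r t / b) / (a + b * Real.cos (r t / b))) * deriv r t * deriv θ t)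
    (ℓ v : ℝ)
    (hℓ : ℓ = (a + b * Real.cos (r 0 / b)) ^ 2 * deriv θ 0)
    (hv : v = Real.sqrt ((deriv r 0) ^ 2 +
      (a + b * Real.cos (r 0 / b)) ^ 2 * (deriv θ 0) ^ 2))
    (t₁ t₂ : ℝ) (h12 : t₁ < t₂)
    (hmono : ∀ t ∈ Set.Icc t₁ t₂, 0 < deriv r t) :
    θ t₂ - θ t₁ =
      ∫ ρ in (r t₁)..(r t₂),
        ℓ / ((a + b * Real.cos (ρ / b)) ^ 2 *
          Real.sqrt (v ^ 2 - ℓ ^ 2 / (a + b * Real.cos (ρ / b)) ^ 2)) := by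
  have hR := hasDerivAt_torusRadius a hb.ne'
  have hR0 (ρ : ℝ) : a + b * cos (ρ / b) ≠ 0 :=
    (torusRadius_pos (abs_lt.2 ⟨by linarith, hab⟩) ρ).ne'
  have hgeo' := IsWarpedProductGeodesic.of_torus hgeo
  have hr₁ := hr.differentiable two_ne_zero
  have hv2 : v ^ 2 = deriv r 0 ^ 2 + (a + b * cos (r 0 / b)) ^ 2 * deriv θ 0 ^ 2 := by
    rw [hv, sq_sqrt (by positivity)]
  rw [hv2]
  refine sub_eq_orbitIntegral_of_conserved (G := fun ρ => a + b * cos (ρ / b))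
    (by fun_prop) hR0 (hr.of_le one_le_two) (hθ.of_le one_le_two) h12.le hmono
    (fun t _ => ?_) (fun t _ => ?_)
  · rw [hℓ]
    exact hgeo'.angularMomentum_eq hR hR0 hr₁ hθ.differentiable_deriv_two t 0
  · exact hgeo'.energy_eq hR hR0 hr₁ hr.differentiable_deriv_two hθ.differentiable_deriv_two t 0

/-- Orbit equation in integral form: on a segment where r' > 0, the azimuthal advance
equals the orbit integral ∫ ℓ / (R(ρ)² √(v² - ℓ²/R(ρ)²)) dρ between the radii. -/
theorem torus_geodesic_orbit_integral
    (a b : ℝ) (hb : 0 < b) (hab : b < a)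
    (r θ : ℝ → ℝ) (hr : ContDiff ℝ 2 r) (hθ : ContDiff ℝ 2 θ)
    (hgeo : ∀ t : ℝ,
      deriv (deriv r) t =
        -Real.sin (r t / b) * (a + b * Real.cos (r t / b)) * (deriv θ t) ^ 2 ∧
      deriv (deriv θ) t =
        (2 * Real.sin (r t / b) / (a + b * Real.cos (r t / b))) * deriv r t * deriv θ t)
    (ℓ v : ℝ)
    (hℓ : ℓ = (a + b * Real.cos (r 0 / b)) ^ 2 * deriv θ 0)
    (hv : v = Real.sqrt ((deriv r 0) ^ 2 +
      (a + b * Real.cos (r 0 / b)) ^ 2 * (deriv θ 0) ^ 2))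
    (hvpos : 0 < v)
    (t₁ t₂ : ℝ) (h12 : t₁ < t₂)
    (hmono : ∀ t ∈ Set.Icc t₁ t₂, 0 < deriv r t) :
    θ t₂ - θ t₁ =
      ∫ ρ in (r t₁)..(r t₂),
        ℓ / ((a + b * Real.cos (ρ / b)) ^ 2 *
          Real.sqrt (v ^ 2 - ℓ ^ 2 / (a + b * Real.cos (ρ / b)) ^ 2)) :=
  torus_geodesic_orbit_integral_general a b hb hab r θ hr hθ hgeo ℓ v hℓ hv t₁ t₂ h12 hmono
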